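/- arXiv:2206.00492 — 2 statements merged into one kernel-verified Lean document; each statement's English description precedes it below -/
import Mathlib

section
/- Let n ≥ 2, 0 < p < n, a = 2/(n+p), b = (n+p-2)/(n+p), and Ω = {(x', x_n) ∈ ℝ^{n-1} × ℝ : |x'| < 1, 0 < x_n < 1 - |x'|²}. Then the function w(x', x_n) = x_n - x_n^a (1 - |x'|²)^b is smooth and convex on Ω, vanishes on ∂Ω, and satisfies det D²w(x', x_n) = a·b·(2b)^{n-1} · x_n^{na-2} · (1 - |x'|²)^{1-na} at every point of Ω. -/
open Real

/-- The Hessian determinant of a function on Euclidean space, computed via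
iterated Fréchet derivatives in the standard coordinate directions. -/
noncomputable def hessDet {n : ℕ} (w : EuclideanSpace ℝ (Fin n) → ℝ)
    (x : EuclideanSpace ℝ (Fin n)) : ℝ :=
  (Matrix.of fun i j : Fin n =>
    fderiv ℝ (fun y => fderiv ℝ w y (EuclideanSpace.single i 1)) x
      (EuclideanSpace.single j 1)).det


section Aux
open Finset
variable {n : ℕ}
local notation "E" n => EuclideanSpace ℝ (Fin n)

noncomputable def Sf (N : Fin n) (x : EuclideanSpace ℝ (Fin n)) : ℝ :=
  ∑ i ∈ Finset.univ.erase N, (x i)^2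

noncomputable def Pm (N : Fin n) (x : EuclideanSpace ℝ (Fin n)) :
    EuclideanSpace ℝ (Fin n) →L[ℝ] ℝ :=
  ∑ i ∈ Finset.univ.erase N, (x i) • EuclideanSpace.proj i

lemma Pm_apply (N : Fin n) (x v : EuclideanSpace ℝ (Fin n)) :
    Pm N x v = ∑ i ∈ Finset.univ.erase N, x i * v i := by
  simp [Pm, ContinuousLinearMap.sum_apply]

lemma Pm_symm (N : Fin n) (x v : EuclideanSpace ℝ (Fin n)) : Pm N x v = Pm N v x := by
  simp [Pm_apply, mul_comm]

lemma Pm_single (N : Fin n) (x : EuclideanSpace ℝ (Fin n)) (i : Fin n) (h : i ≠ N) :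
    Pm N x (EuclideanSpace.single i 1) = x i := by
  rw [Pm_apply]
  rw [Finset.sum_eq_single i]
  · simp [EuclideanSpace.single_apply]
  · intro j hj hji
    simp [EuclideanSpace.single_apply, hji]
  · intro hi; exact absurd (Finset.mem_erase.2 ⟨h, Finset.mem_univ i⟩) hi

lemma Pm_single_N (N : Fin n) (x : EuclideanSpace ℝ (Fin n)) :
    Pm N x (EuclideanSpace.single N 1) = 0 := by
  rw [Pm_apply]
  apply Finset.sum_eq_zero
  intro j hj
  have : j ≠ N := (Finset.mem_erase.1 hj).1
  simp [EuclideanSpace.single_apply, this]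

lemma hasFDerivAt_Sf (N : Fin n) (x : EuclideanSpace ℝ (Fin n)) :
    HasFDerivAt (Sf N) ((2:ℝ) • Pm N x) x := by
  have h : ∀ i ∈ Finset.univ.erase N,
      HasFDerivAt (fun y : EuclideanSpace ℝ (Fin n) => (y i)^2)
        (((2:ℝ) * x i) • (EuclideanSpace.proj i : EuclideanSpace ℝ (Fin n) →L[ℝ] ℝ)) x := by
    intro i _
    have hp := (EuclideanSpace.proj (𝕜 := ℝ) i).hasFDerivAt (x := x)
    have h2 := hp.mul hp
    have : (fun y : EuclideanSpace ℝ (Fin n) => (y i)^2)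
        = fun y => (EuclideanSpace.proj (𝕜 := ℝ) i) y * (EuclideanSpace.proj (𝕜 := ℝ) i) y := by
      funext y; simp [sq]
    rw [this]
    exact h2.congr_fderiv (by ext v; simp [two_mul, add_mul])
  have hD : ((2:ℝ) • Pm N x : EuclideanSpace ℝ (Fin n) →L[ℝ] ℝ)
      = ∑ i ∈ Finset.univ.erase N, ((2:ℝ) * x i) • (EuclideanSpace.proj i : EuclideanSpace ℝ (Fin n) →L[ℝ] ℝ) := by
    rw [Pm, Finset.smul_sum]
    exact Finset.sum_congr rfl fun i _ => smul_smul _ _ _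
  rw [hD]
  exact HasFDerivAt.fun_sum h

lemma contDiff_Sf (N : Fin n) : ContDiff ℝ (⊤ : ℕ∞) (Sf N) := by
  apply ContDiff.sum
  intro i _
  exact (EuclideanSpace.proj (𝕜 := ℝ) i).contDiff.pow 2


noncomputable def wf (a b : ℝ) (N : Fin n) (x : EuclideanSpace ℝ (Fin n)) : ℝ :=
  x N - (x N) ^ a * (1 - Sf N x) ^ b

noncomputable def W1 (a b : ℝ) (N : Fin n) (x : EuclideanSpace ℝ (Fin n)) :
    EuclideanSpace ℝ (Fin n) →L[ℝ] ℝ :=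
  (1 - a * (x N) ^ (a-1) * (1 - Sf N x) ^ b) • (EuclideanSpace.proj N)
  + (2 * b * (x N) ^ a * (1 - Sf N x) ^ (b-1)) • Pm N x

lemma hasFDerivAt_wf (a b : ℝ) (N : Fin n) (x : EuclideanSpace ℝ (Fin n))
    (hu : 0 < x N) (ht : 0 < 1 - Sf N x) :
    HasFDerivAt (wf a b N) (W1 a b N x) x := by
  have hP := (EuclideanSpace.proj (𝕜 := ℝ) N).hasFDerivAt (x := x)
  have hu' : (EuclideanSpace.proj (𝕜 := ℝ) N) x ≠ 0 := ne_of_gt hu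
  have h1 : HasFDerivAt (fun y : EuclideanSpace ℝ (Fin n) => (y N) ^ a)
      ((a * (x N) ^ (a-1)) • (EuclideanSpace.proj N : EuclideanSpace ℝ (Fin n) →L[ℝ] ℝ)) x :=
    hP.rpow_const (Or.inl hu')
  have hS : HasFDerivAt (fun y : EuclideanSpace ℝ (Fin n) => 1 - Sf N y)
      (-((2:ℝ) • Pm N x)) x := ((hasFDerivAt_Sf N x).const_sub 1)
  have h2 : HasFDerivAt (fun y : EuclideanSpace ℝ (Fin n) => (1 - Sf N y) ^ b)
      ((b * (1 - Sf N x) ^ (b-1)) • (-((2:ℝ) • Pm N x))) x :=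
    hS.rpow_const (Or.inl (ne_of_gt ht))
  have h3 := h1.mul h2
  have h4 := hP.sub h3
  refine h4.congr_fderiv ?_
  ext v
  simp [W1, Pm_apply, ContinuousLinearMap.smul_apply]
  ring

noncomputable def W2 (a b : ℝ) (N : Fin n) (x v : EuclideanSpace ℝ (Fin n)) :
    EuclideanSpace ℝ (Fin n) →L[ℝ] ℝ :=
  (-(a*(a-1)) * (x N)^(a-2) * (1 - Sf N x)^b * (v N)
      + 2*a*b*(x N)^(a-1)*(1 - Sf N x)^(b-1) * Pm N x v) • (EuclideanSpace.proj N)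
  + (2*a*b*(x N)^(a-1)*(1 - Sf N x)^(b-1) * (v N)
      + (-(4*b*(b-1))) * (x N)^a * (1 - Sf N x)^(b-2) * Pm N x v) • Pm N x
  + (2*b*(x N)^a*(1 - Sf N x)^(b-1)) • Pm N v

lemma hasFDerivAt_W1v (a b : ℝ) (N : Fin n) (x v : EuclideanSpace ℝ (Fin n))
    (hu : 0 < x N) (ht : 0 < 1 - Sf N x) :
    HasFDerivAt (fun y => W1 a b N y v) (W2 a b N x v) x := by
  have hfun : (fun y => W1 a b N y v) = fun y : EuclideanSpace ℝ (Fin n) =>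
      (1 - a * ((y N) ^ (a-1) * (1 - Sf N y) ^ b)) * v N
      + (2 * b * ((y N) ^ a * (1 - Sf N y) ^ (b-1))) * Pm N y v := by
    funext y
    simp [W1, ContinuousLinearMap.smul_apply]
    ring
  rw [hfun]
  have hP := (EuclideanSpace.proj (𝕜 := ℝ) N).hasFDerivAt (x := x)
  have hu' : (EuclideanSpace.proj (𝕜 := ℝ) N) x ≠ 0 := ne_of_gt hu
  have hS : HasFDerivAt (fun y : EuclideanSpace ℝ (Fin n) => 1 - Sf N y)
      (-((2:ℝ) • Pm N x)) x := ((hasFDerivAt_Sf N x).const_sub 1)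
  have ha1 : HasFDerivAt (fun y : EuclideanSpace ℝ (Fin n) => (y N) ^ (a-1))
      (((a-1) * (x N) ^ (a-1-1)) • (EuclideanSpace.proj N : EuclideanSpace ℝ (Fin n) →L[ℝ] ℝ)) x :=
    hP.rpow_const (Or.inl hu')
  have ha0 : HasFDerivAt (fun y : EuclideanSpace ℝ (Fin n) => (y N) ^ a)
      ((a * (x N) ^ (a-1)) • (EuclideanSpace.proj N : EuclideanSpace ℝ (Fin n) →L[ℝ] ℝ)) x :=
    hP.rpow_const (Or.inl hu')
  have hb0 : HasFDerivAt (fun y : EuclideanSpace ℝ (Fin n) => (1 - Sf N y) ^ b)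
      ((b * (1 - Sf N x) ^ (b-1)) • (-((2:ℝ) • Pm N x))) x :=
    hS.rpow_const (Or.inl (ne_of_gt ht))
  have hb1 : HasFDerivAt (fun y : EuclideanSpace ℝ (Fin n) => (1 - Sf N y) ^ (b-1))
      (((b-1) * (1 - Sf N x) ^ (b-1-1)) • (-((2:ℝ) • Pm N x))) x :=
    hS.rpow_const (Or.inl (ne_of_gt ht))
  have hQ : HasFDerivAt (fun y : EuclideanSpace ℝ (Fin n) => Pm N y v) (Pm N v) x := by
    have : (fun y : EuclideanSpace ℝ (Fin n) => Pm N y v) = fun y => Pm N v y := by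
      funext y; exact Pm_symm N y v
    rw [this]
    exact (Pm N v).hasFDerivAt
  have h := ((((ha1.mul hb0).const_mul a).const_sub 1).mul_const (v N)).add
    (((ha0.mul hb1).const_mul (2*b)).mul hQ)
  refine h.congr_fderiv ?_
  ext w
  simp [W2, ContinuousLinearMap.smul_apply, ContinuousLinearMap.add_apply]
  ring


lemma detM {m : ℕ} (y : Fin (m+1) → ℝ) (c κ d lam : ℝ) (hc : c ≠ 0)
    (hlc : lam * c = κ^2) :
    (Matrix.of fun i j : Fin (m+1) =>
      if i = Fin.last m then (if j = Fin.last m then c else κ * y j)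
      else (if j = Fin.last m then κ * y i
        else (if i = j then d else 0) + lam * y i * y j)).det = c * d ^ m := by
  set M := Matrix.of fun i j : Fin (m+1) =>
      if i = Fin.last m then (if j = Fin.last m then c else κ * y j)
      else (if j = Fin.last m then κ * y i
        else (if i = j then d else 0) + lam * y i * y j) with hM
  have e : Fin m ⊕ Fin 1 ≃ Fin (m+1) := finSumFinEquiv
  set A : Matrix (Fin m) (Fin m) ℝ :=
    Matrix.of fun i j : Fin m => (if i = j then d else 0) + lam * y i.castSucc * y j.castSucc with hA
  set B : Matrix (Fin m) (Fin 1) ℝ := Matrix.of fun i _ => κ * y i.castSucc with hB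
  set C : Matrix (Fin 1) (Fin m) ℝ := Matrix.of fun _ j => κ * y j.castSucc with hC
  set D : Matrix (Fin 1) (Fin 1) ℝ := Matrix.of fun _ _ => c with hD
  have hlast : ∀ j : Fin 1, (finSumFinEquiv (Sum.inr j) : Fin (m+1)) = Fin.last m := by
    intro j
    have : j = 0 := Subsingleton.elim _ _
    subst this
    simp [finSumFinEquiv, Fin.natAdd, Fin.last]
  have hcast : ∀ i : Fin m, (finSumFinEquiv (Sum.inl i) : Fin (m+1)) = i.castSucc := fun i => rfl
  have hne : ∀ i : Fin m, i.castSucc ≠ Fin.last m := fun i => (Fin.castSucc_lt_last i).ne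
  have hsub : M.submatrix finSumFinEquiv finSumFinEquiv = Matrix.fromBlocks A B C D := by
    ext i j
    cases i with
    | inl i =>
      cases j with
      | inl j =>
        simp only [Matrix.submatrix_apply, hcast, Matrix.fromBlocks_apply₁₁, hM, Matrix.of_apply,
          if_neg (hne i), if_neg (hne j), hA, Fin.castSucc_inj]
      | inr j =>
        simp only [Matrix.submatrix_apply, hcast, hlast, Matrix.fromBlocks_apply₁₂, hM,
          Matrix.of_apply, if_neg (hne i), if_pos rfl, hB, if_true]
    | inr i =>
      cases j with
      | inl j =>
        simp only [Matrix.submatrix_apply, hcast, hlast, Matrix.fromBlocks_apply₂₁, hM,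
          Matrix.of_apply, if_neg (hne j), if_pos rfl, hC, if_true]
      | inr j =>
        simp only [Matrix.submatrix_apply, hlast, Matrix.fromBlocks_apply₂₂, hM,
          Matrix.of_apply, if_pos rfl, hD, if_true]
  have hdet1 : M.det = (Matrix.fromBlocks A B C D).det := by
    rw [← hsub, Matrix.det_submatrix_equiv_self]
  letI : Invertible D := by
    refine ⟨Matrix.of fun _ _ => c⁻¹, ?_, ?_⟩ <;>
    · ext i j
      have : i = j := Subsingleton.elim _ _
      subst this
      simp [hD, Matrix.mul_apply, inv_mul_cancel₀ hc, mul_inv_cancel₀ hc]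
  have hschur : A - B * (⅟D) * C = Matrix.of fun i j : Fin m => if i = j then d else 0 := by
    ext i j
    have hBDC : (B * (⅟D) * C) i j = lam * y i.castSucc * y j.castSucc := by
      have hinv : (⅟D : Matrix (Fin 1) (Fin 1) ℝ) = Matrix.of fun _ _ => c⁻¹ := rfl
      simp [Matrix.mul_apply, hinv, hB, hC, Fin.sum_univ_one]
      field_simp
      linear_combination (-(y i.castSucc * y j.castSucc)) * hlc
    simp only [Matrix.sub_apply, hA, Matrix.of_apply, hBDC]
    ring
  rw [hdet1, Matrix.det_fromBlocks₂₂, hschur]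
  have : (Matrix.of fun i j : Fin m => if i = j then d else 0)
      = (d • (1 : Matrix (Fin m) (Fin m) ℝ)) := by
    ext i j
    by_cases h : i = j <;> simp [h, Matrix.one_apply]
  rw [this, Matrix.det_smul, Matrix.det_one, hD]
  simp [Matrix.det_fin_one]



lemma W2_apply (a b : ℝ) (N : Fin n) (x v w : EuclideanSpace ℝ (Fin n)) :
    W2 a b N x v w =
      (-(a*(a-1)) * (x N)^(a-2) * (1 - Sf N x)^b * (v N)
        + 2*a*b*(x N)^(a-1)*(1 - Sf N x)^(b-1) * Pm N x v) * (w N)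
      + (2*a*b*(x N)^(a-1)*(1 - Sf N x)^(b-1) * (v N)
        + (-(4*b*(b-1))) * (x N)^a * (1 - Sf N x)^(b-2) * Pm N x v) * Pm N x w
      + (2*b*(x N)^a*(1 - Sf N x)^(b-1)) * Pm N v w := by
  simp [W2, ContinuousLinearMap.add_apply, ContinuousLinearMap.smul_apply]

lemma W2_nonneg (a b : ℝ) (ha : 0 < a) (hb : 0 < b) (hab : a + b = 1)
    (N : Fin n) (x v : EuclideanSpace ℝ (Fin n))
    (hu : 0 < x N) (ht : 0 < 1 - Sf N x) :
    0 ≤ W2 a b N x v v := by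
  rw [W2_apply]
  set u := x N
  set t := 1 - Sf N x
  set V := v N
  set q := Pm N x v
  have hσ : 0 ≤ Pm N v v := by
    rw [Pm_apply]
    exact Finset.sum_nonneg fun i _ => mul_self_nonneg _
  set σ := Pm N v v
  have hU : 0 < u ^ (a-2) := Real.rpow_pos_of_pos hu _
  have hT : 0 < t ^ (b-2) := Real.rpow_pos_of_pos ht _
  have e1 : u ^ (a-1) = u^(a-2) * u := by
    rw [show a-1 = (a-2)+1 by ring, Real.rpow_add hu, Real.rpow_one]
  have hu2 : u ^ (2:ℝ) = u * u := by
    rw [show (2:ℝ) = ((2:ℕ):ℝ) by norm_num, Real.rpow_natCast]; ring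
  have e2 : u ^ a = u^(a-2) * (u*u) := by
    rw [← hu2, ← Real.rpow_add hu]; ring_nf
  have e3 : t ^ (b-1) = t^(b-2) * t := by
    rw [show b-1 = (b-2)+1 by ring, Real.rpow_add ht, Real.rpow_one]
  have ht2 : t ^ (2:ℝ) = t * t := by
    rw [show (2:ℝ) = ((2:ℕ):ℝ) by norm_num, Real.rpow_natCast]; ring
  have e4 : t ^ b = t^(b-2) * (t*t) := by
    rw [← ht2, ← Real.rpow_add ht]; ring_nf
  have hb1 : b - 1 = -a := by linarith
  have ha1 : a - 1 = -b := by linarith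
  have key : (-(a*(a-1)) * u^(a-2) * t^b * V + 2*a*b*u^(a-1)*t^(b-1) * q) * V
      + (2*a*b*u^(a-1)*t^(b-1) * V + (-(4*b*(b-1))) * u^a * t^(b-2) * q) * q
      + (2*b*u^a*t^(b-1)) * σ
      = a*b*(u^(a-2))*(t^(b-2))*(t*V + 2*u*q)^2
        + 2*b*((u^(a-2))*(u*u))*((t^(b-2))*t)*σ := by
    rw [e1, e2, e3, e4, ha1, hb1]
    ring
  rw [key]
  have h1 : 0 ≤ a*b*(u^(a-2))*(t^(b-2))*(t*V + 2*u*q)^2 := by positivity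
  have h2 : 0 ≤ 2*b*((u^(a-2))*(u*u))*((t^(b-2))*t)*σ := by
    apply mul_nonneg _ hσ
    positivity
  linarith

lemma W2_single (a b : ℝ) (hab : a + b = 1) (N : Fin n) (x : EuclideanSpace ℝ (Fin n))
    (i j : Fin n) :
    W2 a b N x (EuclideanSpace.single i 1) (EuclideanSpace.single j 1) =
      if i = N then (if j = N then a*b*(x N)^(a-2)*(1 - Sf N x)^b
        else (2*a*b*(x N)^(a-1)*(1 - Sf N x)^(b-1)) * x j)
      else (if j = N then (2*a*b*(x N)^(a-1)*(1 - Sf N x)^(b-1)) * x i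
        else (if i = j then 2*b*(x N)^a*(1 - Sf N x)^(b-1) else 0)
          + (4*a*b*(x N)^a*(1 - Sf N x)^(b-2)) * x i * x j) := by
  rw [W2_apply]
  have hsN : ∀ k : Fin n, (EuclideanSpace.single k (1:ℝ)) N = if k = N then 1 else 0 := by
    intro k
    rw [EuclideanSpace.single_apply]
    rcases eq_or_ne k N with h | h
    · simp [h]
    · rw [if_neg (Ne.symm h), if_neg h]
  have hPmv : ∀ k : Fin n, Pm N x (EuclideanSpace.single k 1) = if k = N then 0 else x k := by
    intro k
    by_cases h : k = N
    · subst h; simp [Pm_single_N]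
    · simp [h, Pm_single N x k h]
  have hPm2 : Pm N (EuclideanSpace.single i 1) (EuclideanSpace.single j 1)
      = if i = N then 0 else (if i = j then 1 else 0) := by
    rcases eq_or_ne i N with h | h
    · subst h
      rw [if_pos rfl, Pm_apply]
      refine Finset.sum_eq_zero fun k hk => ?_
      rw [EuclideanSpace.single_apply, if_neg (fun hc => (Finset.mem_erase.1 hk).1 hc), zero_mul]
    · rw [if_neg h]
      rcases eq_or_ne j N with hj | hj
      · subst hj
        rw [Pm_single_N, if_neg (fun hc : i = j => h hc)]
      · rw [Pm_single N _ j hj, EuclideanSpace.single_apply]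
        rcases eq_or_ne i j with hij | hij
        · simp [hij]
        · rw [if_neg (Ne.symm hij), if_neg hij]
  have hab1 : -(a*(a-1)) = a*b := by linear_combination (-a) * hab
  have h4b : -(4*b*(b-1)) = 4*a*b := by linear_combination (-4*b) * hab
  rw [hsN i, hsN j, hPmv i, hPmv j, hPm2, hab1, h4b]
  rcases eq_or_ne i N with hi | hi <;> rcases eq_or_ne j N with hj | hj
  · simp [hi, hj]
  · simp [hi, hj, Ne.symm hj]
  · simp [hj, hi]
  · rcases eq_or_ne i j with hij | hij
    · simp [hij, Ne.symm hj, hj, if_neg hi]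
      ring
    · simp [hij, hi, hj]

end Aux

section Aux2
open Finset
variable {n : ℕ}
lemma rpow_lam_c (a b u t : ℝ) (hu : 0 < u) (ht : 0 < t) :
    (4*a*b*u^a*t^(b-2)) * (a*b*u^(a-2)*t^b) = (2*a*b*u^(a-1)*t^(b-1))^2 := by
  have h1 : u^a * u^(a-2) = u^(a-1) * u^(a-1) := by
    rw [← Real.rpow_add hu, ← Real.rpow_add hu]; congr 1; ring
  have h2 : t^(b-2) * t^b = t^(b-1) * t^(b-1) := by
    rw [← Real.rpow_add ht, ← Real.rpow_add ht]; congr 1; ring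
  linear_combination (4*a^2*b^2*(t^(b-2)*t^b)) * h1 + (4*a^2*b^2*(u^(a-1)*u^(a-1))) * h2

lemma final_alg (a b u t : ℝ) (hu : 0 < u) (ht : 0 < t) (hab : a + b = 1) (m : ℕ) :
    (a*b*u^(a-2)*t^b) * (2*b*u^a*t^(b-1))^m
      = a*b*(2*b)^m * u^(((m+1:ℕ):ℝ)*a - 2) * t^(1 - ((m+1:ℕ):ℝ)*a) := by
  have e1 : u^(a-2) * u^(a*(m:ℝ)) = u^(((m+1:ℕ):ℝ)*a - 2) := by
    rw [← Real.rpow_add hu]; congr 1; push_cast; ring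
  have e2 : t^b * t^((b-1)*(m:ℝ)) = t^(1 - ((m+1:ℕ):ℝ)*a) := by
    rw [← Real.rpow_add ht]; congr 1; push_cast
    linear_combination (1 + (m:ℝ)) * hab
  rw [mul_pow, mul_pow, ← Real.rpow_natCast (u^a) m, ← Real.rpow_mul hu.le,
    ← Real.rpow_natCast (t^(b-1)) m, ← Real.rpow_mul ht.le, ← e1, ← e2]
  ring

end Aux2

theorem stmt0 (n : ℕ) (hn : 2 ≤ n) (p : ℝ) (hp0 : 0 < p) (hpn : p < n)
    (a b : ℝ) (ha : a = 2 / (n + p)) (hb : b = (n + p - 2) / (n + p))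
    (xn : EuclideanSpace ℝ (Fin n) → ℝ) (hxn : ∀ x, xn x = x ⟨n - 1, by omega⟩)
    (s : EuclideanSpace ℝ (Fin n) → ℝ) (hs : ∀ x, s x = ‖x‖ ^ 2 - (xn x) ^ 2)
    (Ω : Set (EuclideanSpace ℝ (Fin n)))
    (hΩ : Ω = {x | s x < 1 ∧ 0 < xn x ∧ xn x < 1 - s x})
    (w : EuclideanSpace ℝ (Fin n) → ℝ)
    (hw : ∀ x, w x = xn x - (xn x) ^ a * (1 - s x) ^ b) :
    ContDiffOn ℝ (⊤ : ℕ∞) w Ω ∧ ConvexOn ℝ Ω w ∧ (∀ x ∈ frontier Ω, w x = 0) ∧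
      ∀ x ∈ Ω, hessDet w x =
        a * b * (2 * b) ^ (n - 1) * (xn x) ^ ((n : ℝ) * a - 2) *
          (1 - s x) ^ (1 - (n : ℝ) * a) := by
  obtain ⟨m, rfl⟩ : ∃ m, n = m + 1 := ⟨n - 1, by omega⟩
  have hm : 1 ≤ m := by omega
  set N : Fin (m+1) := Fin.last m with hN
  have hxn' : xn = fun x => x N := funext fun x => hxn x
  subst hxn'
  have hs' : s = Sf N := by
    funext x
    rw [hs x, Sf]
    have hnorm : ‖x‖^2 = ∑ i, (x i)^2 := by
      rw [EuclideanSpace.norm_eq, Real.sq_sqrt (Finset.sum_nonneg fun i _ => by positivity)]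
      exact Finset.sum_congr rfl fun i _ => sq_abs (x i)
    rw [hnorm, ← Finset.sum_erase_add _ _ (Finset.mem_univ N)]
    ring
  subst hs'
  have hw' : w = wf a b N := funext fun x => hw x
  subst hw'
  subst hΩ
  -- basic positivity of the exponents
  have hm2 : (2:ℝ) ≤ ((m+1:ℕ):ℝ) := by exact_mod_cast hn
  have hnp : (0:ℝ) < ((m+1:ℕ):ℝ) + p := by linarith
  have ha' : 0 < a := by rw [ha]; positivity
  have hb' : 0 < b := by rw [hb]; apply div_pos; linarith; linarith
  have hab : a + b = 1 := by rw [ha, hb]; field_simp; ring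
  -- the auxiliary open set
  have hNcont : Continuous (fun x : EuclideanSpace ℝ (Fin (m+1)) => x N) :=
    (EuclideanSpace.proj (𝕜 := ℝ) N).continuous
  have hScont : Continuous (Sf N) := (contDiff_Sf N).continuous
  set U : Set (EuclideanSpace ℝ (Fin (m+1))) := {x | 0 < x N ∧ 0 < 1 - Sf N x} with hU
  have hUopen : IsOpen U := by
    exact (isOpen_lt continuous_const hNcont).inter
      (isOpen_lt continuous_const (continuous_const.sub hScont))
  have hΩU : {x | Sf N x < 1 ∧ 0 < x N ∧ x N < 1 - Sf N x} ⊆ U := by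
    intro x hx
    exact ⟨hx.2.1, by have := hx.2.1; have := hx.2.2; linarith⟩
  have hΩopen : IsOpen {x : EuclideanSpace ℝ (Fin (m+1)) |
      Sf N x < 1 ∧ 0 < x N ∧ x N < 1 - Sf N x} := by
    have : {x : EuclideanSpace ℝ (Fin (m+1)) | Sf N x < 1 ∧ 0 < x N ∧ x N < 1 - Sf N x}
        = {x | Sf N x < 1} ∩ ({x | 0 < x N} ∩ {x | x N < 1 - Sf N x}) := rfl
    rw [this]
    exact (isOpen_lt hScont continuous_const).inter
      ((isOpen_lt continuous_const hNcont).inter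
        (isOpen_lt hNcont (continuous_const.sub hScont)))
  refine ⟨?_, ?_, ?_, ?_⟩
  -- (1) smoothness
  · intro x hx
    apply ContDiffAt.contDiffWithinAt
    have hu : 0 < x N := hx.2.1
    have ht : 0 < 1 - Sf N x := (hΩU hx).2
    have h1 : ContDiffAt ℝ (⊤ : ℕ∞) (fun y : EuclideanSpace ℝ (Fin (m+1)) => y N) x :=
      (EuclideanSpace.proj (𝕜 := ℝ) N).contDiff.contDiffAt
    have h2 := h1.rpow_const_of_ne (ne_of_gt hu) (p := a)
    have h3 : ContDiffAt ℝ (⊤ : ℕ∞) (fun y : EuclideanSpace ℝ (Fin (m+1)) => 1 - Sf N y) x :=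
      (contDiff_const.sub (contDiff_Sf N)).contDiffAt
    have h4 := h3.rpow_const_of_ne (ne_of_gt ht) (p := b)
    exact h1.sub (h2.mul h4)
  -- (2) convexity
  · have hΩconv : Convex ℝ {x : EuclideanSpace ℝ (Fin (m+1)) |
        Sf N x < 1 ∧ 0 < x N ∧ x N < 1 - Sf N x} := by
      intro x hx y hy θ τ hθ hτ hθτ
      have hzN : (θ • x + τ • y) N = θ * x N + τ * y N := by
        simp [PiLp.add_apply, PiLp.smul_apply, smul_eq_mul]
      have hSz : Sf N (θ • x + τ • y) ≤ θ * Sf N x + τ * Sf N y := by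
        rw [Sf, Sf, Sf, Finset.mul_sum, Finset.mul_sum, ← Finset.sum_add_distrib]
        apply Finset.sum_le_sum
        intro i _
        have hzi : (θ • x + τ • y) i = θ * x i + τ * y i := by
          simp [PiLp.add_apply, PiLp.smul_apply, smul_eq_mul]
        rw [hzi]
        nlinarith [sq_nonneg (x i - y i), mul_nonneg hθ hτ, sq_nonneg (θ * x i - τ * y i)]
      rcases eq_or_lt_of_le hθ with hθ0 | hθpos
      · have hτ1 : τ = 1 := by linarith
        have : θ • x + τ • y = y := by rw [← hθ0, hτ1]; simp
        rw [Set.mem_setOf_eq, this]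
        exact hy
      · have h2 : 0 < (θ • x + τ • y) N := by
          rw [hzN]
          have : 0 < θ * x N := mul_pos hθpos hx.2.1
          nlinarith [mul_nonneg hτ hy.2.1.le]
        have h3 : (θ • x + τ • y) N < 1 - Sf N (θ • x + τ • y) := by
          rw [hzN]
          have h4 : θ * x N < θ * (1 - Sf N x) := by
            exact mul_lt_mul_of_pos_left hx.2.2 hθpos
          have h5 : τ * y N ≤ τ * (1 - Sf N y) := mul_le_mul_of_nonneg_left hy.2.2.le hτ
          have h6 := hSz
          nlinarith
        exact ⟨by linarith, h2, h3⟩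
    refine ⟨hΩconv, ?_⟩
    intro x hx y hy θ τ hθ hτ hθτ
    set γ : ℝ → EuclideanSpace ℝ (Fin (m+1)) := fun r => y + r • (x - y) with hγ
    have hseg : ∀ r ∈ Set.Icc (0:ℝ) 1, γ r ∈ {x : EuclideanSpace ℝ (Fin (m+1)) |
        Sf N x < 1 ∧ 0 < x N ∧ x N < 1 - Sf N x} :=
      fun r hr => hΩconv.add_smul_sub_mem hy hx hr
    have hγd : ∀ r : ℝ, HasDerivAt γ (x - y) r := by
      intro r
      have h1 : HasDerivAt (fun r : ℝ => r • (x - y)) (x - y) r := by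
        simpa using (hasDerivAt_id r).smul_const (x - y)
      exact h1.const_add y
    have hg' : ∀ r ∈ Set.Icc (0:ℝ) 1,
        HasDerivAt (fun r => wf a b N (γ r)) (W1 a b N (γ r) (x - y)) r := by
      intro r hr
      have hmem := hseg r hr
      exact (hasFDerivAt_wf a b N (γ r) hmem.2.1
        (by have := hmem.2.1; have := hmem.2.2; linarith)).comp_hasDerivAt r (hγd r)
    have hg'' : ∀ r ∈ Set.Icc (0:ℝ) 1,
        HasDerivAt (fun r => W1 a b N (γ r) (x - y))
          (W2 a b N (γ r) (x - y) (x - y)) r := by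
      intro r hr
      have hmem := hseg r hr
      exact (hasFDerivAt_W1v a b N (γ r) (x - y) hmem.2.1
        (by have := hmem.2.1; have := hmem.2.2; linarith)).comp_hasDerivAt r (hγd r)
    have hgconv : ConvexOn ℝ (Set.Icc (0:ℝ) 1) (fun r => wf a b N (γ r)) := by
      refine convexOn_of_hasDerivWithinAt2_nonneg (convex_Icc 0 1)
        (f' := fun r => W1 a b N (γ r) (x - y))
        (f'' := fun r => W2 a b N (γ r) (x - y) (x - y)) ?_ ?_ ?_ ?_
      · exact fun r hr => ((hg' r hr).continuousAt).continuousWithinAt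
      · intro r hr
        rw [interior_Icc] at hr
        exact ((hg' r (Set.mem_Icc_of_Ioo hr)).hasDerivWithinAt)
      · intro r hr
        rw [interior_Icc] at hr
        exact ((hg'' r (Set.mem_Icc_of_Ioo hr)).hasDerivWithinAt)
      · intro r hr
        rw [interior_Icc] at hr
        have hmem := hseg r (Set.mem_Icc_of_Ioo hr)
        exact W2_nonneg a b ha' hb' hab N (γ r) (x - y) hmem.2.1
          (by have := hmem.2.1; have := hmem.2.2; linarith)
    have key := hgconv.2 (Set.right_mem_Icc.2 zero_le_one) (Set.left_mem_Icc.2 zero_le_one)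
      hθ hτ hθτ
    have hγ1 : γ 1 = x := by simp [hγ]
    have hγ0 : γ 0 = y := by simp [hγ]
    have hγθ : γ (θ * 1 + τ * 0) = θ • x + τ • y := by
      have hτ1 : τ = 1 - θ := by linarith
      rw [hγ]
      simp only [mul_one, mul_zero, add_zero]
      rw [hτ1, smul_sub, sub_smul, one_smul]
      abel
    have key2 : wf a b N (γ (θ * 1 + τ * 0)) ≤ θ * wf a b N (γ 1) + τ * wf a b N (γ 0) := by
      simpa [smul_eq_mul] using key
    rw [hγθ, hγ1, hγ0] at key2
    simpa [smul_eq_mul] using key2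
  -- (3) boundary values
  · intro x hx
    have hcl : x ∈ closure {x : EuclideanSpace ℝ (Fin (m+1)) |
        Sf N x < 1 ∧ 0 < x N ∧ x N < 1 - Sf N x} := hx.1
    have hnotin : x ∉ {x : EuclideanSpace ℝ (Fin (m+1)) |
        Sf N x < 1 ∧ 0 < x N ∧ x N < 1 - Sf N x} := by
      intro hc
      exact hx.2 (by rwa [hΩopen.interior_eq])
    have hsub : closure {x : EuclideanSpace ℝ (Fin (m+1)) |
          Sf N x < 1 ∧ 0 < x N ∧ x N < 1 - Sf N x}
        ⊆ {x | 0 ≤ x N ∧ x N ≤ 1 - Sf N x} := by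
      apply closure_minimal
      · exact fun y hy => ⟨hy.2.1.le, hy.2.2.le⟩
      · exact (isClosed_le continuous_const hNcont).inter
          (isClosed_le hNcont (continuous_const.sub hScont))
    obtain ⟨h0, h1⟩ := hsub hcl
    rcases eq_or_lt_of_le h0 with he | hlt
    · rw [wf, ← he, Real.zero_rpow (ne_of_gt ha'), zero_mul, sub_zero]
    · rcases eq_or_lt_of_le h1 with he | hlt2
      · rw [wf, ← he, ← Real.rpow_add hlt, hab, Real.rpow_one, sub_self]
      · exact absurd ⟨by linarith, hlt, hlt2⟩ hnotin
  -- (4) Hessian determinant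
  · intro x hx
    have hu : 0 < x N := hx.2.1
    have ht : 0 < 1 - Sf N x := (hΩU hx).2
    have hW1 : ∀ y ∈ U, fderiv ℝ (wf a b N) y = W1 a b N y :=
      fun y hy => (hasFDerivAt_wf a b N y hy.1 hy.2).fderiv
    have hent : ∀ i j : Fin (m+1),
        fderiv ℝ (fun y => fderiv ℝ (wf a b N) y (EuclideanSpace.single i 1)) x
            (EuclideanSpace.single j 1)
          = W2 a b N x (EuclideanSpace.single i 1) (EuclideanSpace.single j 1) := by
      intro i j
      have hev : (fun y => fderiv ℝ (wf a b N) y (EuclideanSpace.single i 1))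
          =ᶠ[nhds x] (fun y => W1 a b N y (EuclideanSpace.single i 1)) := by
        filter_upwards [hUopen.mem_nhds (hΩU hx)] with y hy
        rw [hW1 y hy]
      rw [hev.fderiv_eq, (hasFDerivAt_W1v a b N x _ hu ht).fderiv]
    have hmat : (Matrix.of fun i j : Fin (m+1) =>
        fderiv ℝ (fun y => fderiv ℝ (wf a b N) y (EuclideanSpace.single i 1)) x
          (EuclideanSpace.single j 1))
        = Matrix.of fun i j : Fin (m+1) =>
          if i = Fin.last m then
            (if j = Fin.last m then a*b*(x N)^(a-2)*(1 - Sf N x)^b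
              else (2*a*b*(x N)^(a-1)*(1 - Sf N x)^(b-1)) * x j)
          else (if j = Fin.last m then (2*a*b*(x N)^(a-1)*(1 - Sf N x)^(b-1)) * x i
            else (if i = j then 2*b*(x N)^a*(1 - Sf N x)^(b-1) else 0)
              + (4*a*b*(x N)^a*(1 - Sf N x)^(b-2)) * x i * x j) := by
      ext i j
      rw [Matrix.of_apply, Matrix.of_apply, hent i j, W2_single a b hab N x i j]
    have hc : a*b*(x N)^(a-2)*(1 - Sf N x)^b ≠ 0 := by
      have : 0 < a*b*(x N)^(a-2)*(1 - Sf N x)^b := by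
        have h1 := Real.rpow_pos_of_pos hu (a-2)
        have h2 := Real.rpow_pos_of_pos ht b
        positivity
      exact ne_of_gt this
    have hlc : (4*a*b*(x N)^a*(1 - Sf N x)^(b-2)) * (a*b*(x N)^(a-2)*(1 - Sf N x)^b)
        = (2*a*b*(x N)^(a-1)*(1 - Sf N x)^(b-1))^2 := rpow_lam_c a b (x N) (1 - Sf N x) hu ht
    rw [hessDet, hmat, detM (fun i => x i) _ _ _ _ hc hlc]
    rw [final_alg a b (x N) (1 - Sf N x) hu ht hab m]
    norm_num
end

section
/- For every n ≥ 2 and every α with 1/n < α < 1, there exist a bounded convex domain Ω ⊂ ℝⁿ and a convex function v ∈ C(Ω̄) ∩ C^∞(Ω) with v = 0 on ∂Ω and det D²v ∈ L¹(Ω), but v ∉ C^α(Ω̄). -/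
open Real

section Aux

open Set MeasureTheory

/-- Projection onto coordinate `i` as a continuous linear map, with fixed scalars. -/
noncomputable def pr (n : ℕ) (i : Fin n) : EuclideanSpace ℝ (Fin n) →L[ℝ] ℝ :=
  EuclideanSpace.proj i

@[simp] lemma pr_apply {n : ℕ} (i : Fin n) (x : EuclideanSpace ℝ (Fin n)) :
    pr n i x = x i := rfl

/-- The counterexample function. -/
noncomputable def vf (n k : ℕ) (β : ℝ) [NeZero n] : EuclideanSpace ℝ (Fin n) → ℝ :=
  fun x => (x 0 - (x 0) ^ β) + ∑ j ∈ Finset.univ.erase (0 : Fin n), (x j) ^ k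

/-- The counterexample domain. -/
def Om (n k : ℕ) (β : ℝ) [NeZero n] : Set (EuclideanSpace ℝ (Fin n)) :=
  {x | 0 < x 0 ∧ vf n k β x < 0}

/-- First derivative of `vf`. -/
noncomputable def Dmap (n k : ℕ) (β : ℝ) [NeZero n] (y : EuclideanSpace ℝ (Fin n)) :
    EuclideanSpace ℝ (Fin n) →L[ℝ] ℝ :=
  (pr n 0 - (β * (y 0) ^ (β - 1)) • pr n 0) +
  ∑ j ∈ Finset.univ.erase (0:Fin n), ((k:ℝ) * (y j) ^ (k - 1)) • pr n j

noncomputable def Gf (γ : ℝ) {n : ℕ} [NeZero n] (i : Fin n) : ℝ → ℝ :=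
  if i = 0 then (Ioo (0:ℝ) 1).indicator (fun t => t ^ γ)
  else (Ioo (-1:ℝ) 1).indicator (fun _ => 1)

noncomputable def Gfun (n : ℕ) [NeZero n] (γ : ℝ) : EuclideanSpace ℝ (Fin n) → ℝ :=
  fun x => ∏ i, Gf γ i (x i)

variable {n k : ℕ} {β : ℝ} [NeZero n]

lemma cont_rpow (hβ : 0 < β) : Continuous fun t : ℝ => t ^ β := by
  rw [continuous_iff_continuousAt]
  intro x
  exact Real.continuousAt_rpow_const x β (Or.inr hβ.le)

lemma vf_cont (hβ : 0 < β) : Continuous (vf n k β) := by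
  unfold vf
  apply Continuous.add
  · exact (pr n 0).continuous.sub ((cont_rpow hβ).comp (pr n 0).continuous)
  · exact continuous_finset_sum _ fun j _ => ((pr n j).continuous.pow k)

lemma Om_open (hβ : 0 < β) : IsOpen (Om n k β) :=
  IsOpen.inter (isOpen_lt continuous_const (pr n 0).continuous)
    (isOpen_lt (vf_cont hβ) continuous_const)

lemma convexOn_finset_sum {E : Type*} [AddCommGroup E] [Module ℝ E] {s : Set E}
    {ι : Type*} (t : Finset ι) {f : ι → E → ℝ} (hs : Convex ℝ s)
    (h : ∀ j ∈ t, ConvexOn ℝ s (f j)) :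
    ConvexOn ℝ s (fun x => ∑ j ∈ t, f j x) := by
  classical
  induction t using Finset.induction with
  | empty => simpa using convexOn_const 0 hs
  | insert a u hx ih =>
      simp only [Finset.sum_insert hx]
      exact (h a (Finset.mem_insert_self a u)).add
        (ih fun j hj => h j (Finset.mem_insert_of_mem hj))

lemma vf_convexOn (hβ0 : 0 < β) (hβ1 : β < 1) (hk : Even k) :
    ConvexOn ℝ {x : EuclideanSpace ℝ (Fin n) | 0 ≤ x 0} (vf n k β) := by
  set L := (pr n 0).toLinearMap
  have hpre : {x : EuclideanSpace ℝ (Fin n) | 0 ≤ x 0} = L.toAffineMap ⁻¹' (Ici 0) := rfl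
  have hS : Convex ℝ {x : EuclideanSpace ℝ (Fin n) | 0 ≤ x 0} := by
    rw [hpre]; exact (convex_Ici (0:ℝ)).affine_preimage _
  apply ConvexOn.add
  · apply ConvexOn.sub (L.convexOn hS)
    have hc : ConcaveOn ℝ (Ici (0:ℝ)) (fun t : ℝ => t ^ β) :=
      (Real.strictConcaveOn_rpow hβ0 hβ1).concaveOn
    have := hc.comp_affineMap L.toAffineMap
    rw [← hpre] at this
    exact this
  · apply convexOn_finset_sum _ hS
    intro j _
    have hp : ConvexOn ℝ (univ : Set ℝ) (fun t : ℝ => t ^ k) := hk.convexOn_pow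
    have := hp.comp_affineMap (pr n j).toLinearMap.toAffineMap
    exact this.subset (fun x _ => mem_univ _) hS

lemma sum_pow_nonneg (hk : Even k) (x : EuclideanSpace ℝ (Fin n)) :
    0 ≤ ∑ j ∈ Finset.univ.erase (0 : Fin n), (x j) ^ k :=
  Finset.sum_nonneg fun j _ => hk.pow_nonneg _

lemma mem_Om_lt_one (hβ1 : β < 1) (hk : Even k)
    {x : EuclideanSpace ℝ (Fin n)} (hx : x ∈ Om n k β) : x 0 < 1 := by
  obtain ⟨h0, hv⟩ := hx
  have hs := sum_pow_nonneg hk (n := n) (k := k) x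
  have hlt : x 0 < (x 0) ^ β := by unfold vf at hv; linarith
  by_contra h
  push_neg at h
  have : (x 0) ^ β ≤ (x 0) ^ (1:ℝ) := Real.rpow_le_rpow_of_exponent_le h hβ1.le
  rw [Real.rpow_one] at this
  linarith

lemma mem_Om_pow_le (hk : Even k)
    {x : EuclideanSpace ℝ (Fin n)} (hx : x ∈ Om n k β) {j : Fin n} (hj : j ≠ 0) :
    (x j) ^ k ≤ (x 0) ^ β := by
  obtain ⟨h0, hv⟩ := hx
  have hterm : (x j) ^ k ≤ ∑ i ∈ Finset.univ.erase (0 : Fin n), (x i) ^ k :=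
    Finset.single_le_sum (fun i _ => hk.pow_nonneg (x i))
      (Finset.mem_erase.2 ⟨hj, Finset.mem_univ _⟩)
  unfold vf at hv
  have := h0.le
  nlinarith [Real.rpow_pos_of_pos h0 β]

lemma mem_Om_abs_lt_one (hβ0 : 0 < β) (hβ1 : β < 1) (hk : Even k) (hk0 : k ≠ 0)
    {x : EuclideanSpace ℝ (Fin n)} (hx : x ∈ Om n k β) (j : Fin n) : |x j| < 1 := by
  rcases eq_or_ne j 0 with rfl | hj
  · rw [abs_of_pos hx.1]; exact mem_Om_lt_one hβ1 hk hx
  · have h1 : (x j) ^ k ≤ (x 0) ^ β := mem_Om_pow_le hk hx hj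
    have h2 : (x 0) ^ β < 1 :=
      Real.rpow_lt_one hx.1.le (mem_Om_lt_one hβ1 hk hx) hβ0
    by_contra h
    push_neg at h
    have : (1:ℝ) ≤ |x j| ^ k := one_le_pow₀ h
    rw [← abs_pow, abs_of_nonneg (hk.pow_nonneg _)] at this
    linarith

lemma Om_bounded (hβ0 : 0 < β) (hβ1 : β < 1) (hk : Even k) (hk0 : k ≠ 0) :
    Bornology.IsBounded (Om n k β) := by
  rw [Metric.isBounded_iff_subset_closedBall 0]
  refine ⟨Real.sqrt n, fun x hx => ?_⟩
  rw [Metric.mem_closedBall, dist_zero_right, EuclideanSpace.norm_eq]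
  apply Real.sqrt_le_sqrt
  calc ∑ i, ‖x i‖ ^ 2 ≤ ∑ _i : Fin n, 1 := by
        apply Finset.sum_le_sum
        intro i _
        have := (mem_Om_abs_lt_one hβ0 hβ1 hk hk0 hx i).le
        rw [Real.norm_eq_abs]
        nlinarith [abs_nonneg (x i)]
    _ = n := by simp

lemma vf_single (hk0 : k ≠ 0) (t : ℝ) :
    vf n k β (EuclideanSpace.single (0 : Fin n) t) = t - t ^ β := by
  unfold vf
  have hz : ∀ j ∈ Finset.univ.erase (0 : Fin n),
      ((EuclideanSpace.single (0 : Fin n) t) j) ^ k = 0 := by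
    intro j hj
    rw [EuclideanSpace.single_apply]
    rw [if_neg (Finset.mem_erase.1 hj).1]
    exact zero_pow hk0
  have hval : (EuclideanSpace.single (0 : Fin n) t) 0 = t := by
    simp [EuclideanSpace.single_apply]
  rw [Finset.sum_congr rfl hz, Finset.sum_const_zero, add_zero, hval]

lemma single_mem_Om (hβ1 : β < 1) (hk0 : k ≠ 0) {t : ℝ} (ht0 : 0 < t) (ht1 : t < 1) :
    (EuclideanSpace.single (0 : Fin n) t) ∈ Om n k β := by
  constructor
  · simpa using ht0
  · rw [vf_single hk0]
    have : t ^ (1:ℝ) < t ^ β := Real.rpow_lt_rpow_of_exponent_gt ht0 ht1 hβ1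
    rw [Real.rpow_one] at this
    linarith

lemma closure_Om_subset (hβ : 0 < β) :
    closure (Om n k β) ⊆ {x : EuclideanSpace ℝ (Fin n) | 0 ≤ x 0 ∧ vf n k β x ≤ 0} := by
  apply closure_minimal
  · exact fun x hx => ⟨hx.1.le, hx.2.le⟩
  · exact (isClosed_le continuous_const (pr n 0).continuous).inter
      (isClosed_le (vf_cont hβ) continuous_const)

lemma frontier_Om_zero (hβ : 0 < β) (hk : Even k) :
    ∀ x ∈ frontier (Om n k β), vf n k β x = 0 := by
  intro x hx
  rw [frontier, (Om_open hβ).interior_eq] at hx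
  obtain ⟨hxc, hxn⟩ := hx
  obtain ⟨h0, hle⟩ := closure_Om_subset hβ hxc
  rcases eq_or_lt_of_le h0 with h0 | h0
  · have : vf n k β x = ∑ j ∈ Finset.univ.erase (0 : Fin n), (x j) ^ k := by
      unfold vf
      rw [← h0, Real.zero_rpow hβ.ne']
      ring
    have hs : 0 ≤ ∑ j ∈ Finset.univ.erase (0 : Fin n), (x j) ^ k :=
      Finset.sum_nonneg fun j _ => hk.pow_nonneg _
    linarith [this ▸ hle, this ▸ hs]
  · have : ¬ vf n k β x < 0 := fun h => hxn ⟨h0, h⟩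
    linarith [not_lt.1 this]

end Aux
section Aux2
open Set MeasureTheory
variable {n k : ℕ} {β : ℝ} [NeZero n]

lemma hasFDerivAt_vf {y : EuclideanSpace ℝ (Fin n)} (hy : 0 < y 0) :
    HasFDerivAt (vf n k β) (Dmap n k β y) y := by
  apply HasFDerivAt.add
  · have h1 := (Real.hasDerivAt_rpow_const (p := β) (Or.inl hy.ne')).comp_hasFDerivAt y
        ((pr n 0).hasFDerivAt)
    exact ((pr n 0).hasFDerivAt).sub h1
  · exact HasFDerivAt.fun_sum fun j _ => by
      have h1 := (hasDerivAt_pow k (y j)).comp_hasFDerivAt y ((pr n j).hasFDerivAt)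
      exact h1

lemma Dmap_single (y : EuclideanSpace ℝ (Fin n)) (i : Fin n) :
    Dmap n k β y (EuclideanSpace.single i 1) =
      if i = 0 then 1 - β * (y 0) ^ (β - 1) else (k:ℝ) * (y i) ^ (k - 1) := by
  classical
  unfold Dmap
  rw [ContinuousLinearMap.add_apply, ContinuousLinearMap.sub_apply,
    ContinuousLinearMap.smul_apply, ContinuousLinearMap.sum_apply]
  simp only [ContinuousLinearMap.smul_apply, pr_apply,
    EuclideanSpace.single_apply, smul_eq_mul]
  rcases eq_or_ne i 0 with rfl | hi
  · rw [if_pos rfl, Finset.sum_eq_zero]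
    · simp
    · intro j hj
      rw [if_neg (Finset.mem_erase.1 hj).1, mul_zero]
  · rw [if_neg hi, if_neg (fun h : (0:Fin n) = i => hi h.symm)]
    rw [Finset.sum_eq_single_of_mem i (Finset.mem_erase.2 ⟨hi, Finset.mem_univ _⟩)]
    · simp
    · intro j _ hji
      rw [if_neg hji, mul_zero]

lemma snd_deriv (hk : 1 ≤ k) {x : EuclideanSpace ℝ (Fin n)} (hx0 : 0 < x 0)
    (i : Fin n) :
    fderiv ℝ (fun y => fderiv ℝ (vf n k β) y (EuclideanSpace.single i 1)) x =
      (if i = 0 then β * (1 - β) * (x 0) ^ (β - 2)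
        else (k:ℝ) * ((k:ℝ) - 1) * (x i) ^ (k - 2)) • pr n i := by
  have hS : IsOpen {y : EuclideanSpace ℝ (Fin n) | 0 < y 0} :=
    isOpen_lt continuous_const (pr n 0).continuous
  have hmem : {y : EuclideanSpace ℝ (Fin n) | 0 < y 0} ∈ nhds x := hS.mem_nhds hx0
  have h1 : (fun y => fderiv ℝ (vf n k β) y (EuclideanSpace.single i 1)) =ᶠ[nhds x]
      (fun y => if i = 0 then 1 - β * (y 0) ^ (β - 1) else (k:ℝ) * (y i) ^ (k - 1)) := by
    filter_upwards [hmem] with y hy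
    rw [(hasFDerivAt_vf (β := β) (k := k) hy).fderiv, Dmap_single]
  rw [h1.fderiv_eq]
  rcases eq_or_ne i 0 with rfl | hi
  · simp only [if_pos rfl, if_true]
    have hd : HasDerivAt (fun t : ℝ => 1 - β * t ^ (β - 1))
        (-(β * ((β - 1) * (x 0) ^ (β - 1 - 1)))) (x 0) :=
      HasDerivAt.const_sub 1 ((Real.hasDerivAt_rpow_const (p := β - 1) (Or.inl hx0.ne')).const_mul β)
    have h2 : HasFDerivAt (fun y : EuclideanSpace ℝ (Fin n) => 1 - β * (y 0) ^ (β - 1))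
        ((-(β * ((β - 1) * (x 0) ^ (β - 1 - 1)))) • pr n 0) x := by
      have h3 := hd.comp_hasFDerivAt x ((pr n 0).hasFDerivAt)
      exact h3
    rw [h2.fderiv]
    congr 1
    rw [show β - 1 - 1 = β - 2 by ring]
    ring
  · simp only [if_neg hi]
    have hd : HasDerivAt (fun t : ℝ => (k:ℝ) * t ^ (k - 1))
        ((k:ℝ) * (↑(k - 1) * (x i) ^ (k - 1 - 1))) (x i) :=
      (hasDerivAt_pow (k - 1) (x i)).const_mul (k:ℝ)
    have h2 : HasFDerivAt (fun y : EuclideanSpace ℝ (Fin n) => (k:ℝ) * (y i) ^ (k - 1))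
        (((k:ℝ) * (↑(k - 1) * (x i) ^ (k - 1 - 1))) • pr n i) x := by
      have h3 := hd.comp_hasFDerivAt x ((pr n i).hasFDerivAt)
      exact h3
    rw [h2.fderiv]
    congr 1
    rw [Nat.cast_sub hk, Nat.cast_one, Nat.sub_sub]
    norm_num
    ring

lemma hessDet_eq (hk : 1 ≤ k) {x : EuclideanSpace ℝ (Fin n)} (hx0 : 0 < x 0) :
    hessDet (vf n k β) x =
      (β * (1 - β) * (x 0) ^ (β - 2)) *
        ∏ j ∈ Finset.univ.erase (0 : Fin n), ((k:ℝ) * ((k:ℝ) - 1) * (x j) ^ (k - 2)) := by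
  classical
  unfold hessDet
  have hM : (Matrix.of fun i j : Fin n =>
      fderiv ℝ (fun y => fderiv ℝ (vf n k β) y (EuclideanSpace.single i 1)) x
        (EuclideanSpace.single j 1)) =
      Matrix.diagonal (fun i => if i = 0 then β * (1 - β) * (x 0) ^ (β - 2)
        else (k:ℝ) * ((k:ℝ) - 1) * (x i) ^ (k - 2)) := by
    ext i j
    rw [Matrix.of_apply, snd_deriv hk hx0 i, ContinuousLinearMap.smul_apply]
    rw [Matrix.diagonal_apply]
    simp only [pr_apply, EuclideanSpace.single_apply, smul_eq_mul]
    rcases eq_or_ne i j with rfl | hij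
    · rw [if_pos rfl, if_pos rfl, mul_one]
    · rw [if_neg hij, if_neg hij, mul_zero]
  rw [hM, Matrix.det_diagonal]
  rw [← Finset.mul_prod_erase Finset.univ _ (Finset.mem_univ (0:Fin n))]
  rw [if_pos rfl]
  congr 1
  apply Finset.prod_congr rfl
  intro j hj
  rw [if_neg (Finset.mem_erase.1 hj).1]

end Aux2
section Aux3
open Set MeasureTheory
variable {n k : ℕ} {β : ℝ} [NeZero n]

lemma G_integrable {γ : ℝ} (hγ : -1 < γ) :
    Integrable (Gfun n γ) := by
  classical
  have hfi : ∀ i : Fin n, Integrable (Gf γ i) := by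
    intro i
    unfold Gf
    rcases eq_or_ne i 0 with rfl | hi
    · rw [if_pos rfl, integrable_indicator_iff measurableSet_Ioo]
      exact (intervalIntegral.integrableOn_Ioo_rpow_iff one_pos).2 hγ
    · rw [if_neg hi, integrable_indicator_iff measurableSet_Ioo]
      exact integrableOn_const measure_Ioo_lt_top.ne
  have hprod : Integrable (fun x : Fin n → ℝ => ∏ i, Gf γ i (x i)) :=
    Integrable.fintype_prod hfi
  have hT := EuclideanSpace.volume_preserving_symm_measurableEquiv_toLp (Fin n)
  exact (hT.integrable_comp_emb (MeasurableEquiv.measurableEmbedding _)).2 hprod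

lemma Gfun_eq {γ : ℝ} {x : EuclideanSpace ℝ (Fin n)}
    (h0 : x 0 ∈ Ioo (0:ℝ) 1) (hj : ∀ j : Fin n, j ≠ 0 → x j ∈ Ioo (-1:ℝ) 1) :
    Gfun n γ x = (x 0) ^ γ := by
  classical
  unfold Gfun
  rw [← Finset.mul_prod_erase Finset.univ _ (Finset.mem_univ (0 : Fin n))]
  have h1 : Gf γ (0 : Fin n) (x 0) = (x 0) ^ γ := by
    unfold Gf; rw [if_pos rfl, indicator_of_mem h0]
  have h2 : ∀ j ∈ Finset.univ.erase (0 : Fin n), Gf γ j (x j) = 1 := by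
    intro j hjm
    have hj' := (Finset.mem_erase.1 hjm).1
    unfold Gf; rw [if_neg hj', indicator_of_mem (hj j hj')]
  rw [h1, Finset.prod_congr rfl h2, Finset.prod_const_one, mul_one]

lemma pow_sub_two_le (hk2 : 2 ≤ k) (hkeven : Even k) {t b : ℝ}
    (h : t ^ k ≤ b) :
    t ^ (k - 2) ≤ b ^ (((k:ℝ) - 2) / (k:ℝ)) := by
  have hk0 : (k:ℝ) ≠ 0 := Nat.cast_ne_zero.2 (by omega)
  have he0 : 0 ≤ ((k:ℝ) - 2) / (k:ℝ) := by
    apply div_nonneg _ (Nat.cast_nonneg k)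
    have : (2:ℝ) ≤ (k:ℝ) := by exact_mod_cast hk2
    linarith
  have hev2 : Even (k - 2) := by
    obtain ⟨m, hm⟩ := hkeven; exact ⟨m - 1, by omega⟩
  have h1 : t ^ (k - 2) = (t ^ k) ^ (((k:ℝ) - 2) / (k:ℝ)) := by
    rw [← hkeven.pow_abs t, ← hev2.pow_abs t]
    rw [← Real.rpow_natCast |t| (k - 2), ← Real.rpow_natCast |t| k]
    rw [← Real.rpow_mul (abs_nonneg t)]
    congr 1
    rw [Nat.cast_sub hk2]
    field_simp
    norm_num
  rw [h1]
  apply Real.rpow_le_rpow _ h he0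
  rw [← hkeven.pow_abs t]
  exact pow_nonneg (abs_nonneg t) k

lemma vf_contDiffOn (hn : 1 ≤ n) :
    ContDiffOn ℝ (⊤ : ℕ∞) (vf n k β) {x : EuclideanSpace ℝ (Fin n) | 0 < x 0} := by
  apply ContDiffOn.add
  · apply ContDiffOn.sub ((pr n 0).contDiff.contDiffOn)
    intro x hx
    apply ContDiffAt.contDiffWithinAt
    exact (Real.contDiffAt_rpow_const_of_ne (ne_of_gt hx)).comp x (pr n 0).contDiff.contDiffAt
  · exact ContDiffOn.sum fun j _ => ((pr n j).contDiff.pow k).contDiffOn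

lemma hessDet_nonneg (hβ0 : 0 < β) (hβ1 : β < 1) (hk2 : 2 ≤ k) (hkeven : Even k)
    {x : EuclideanSpace ℝ (Fin n)} (hx0 : 0 < x 0) :
    0 ≤ hessDet (vf n k β) x := by
  rw [hessDet_eq (by omega) hx0]
  have hp := Real.rpow_pos_of_pos hx0 (β - 2)
  have hββ : 0 < β * (1 - β) := by nlinarith
  apply mul_nonneg (le_of_lt (mul_pos hββ hp))
  apply Finset.prod_nonneg
  intro j _
  have h2 : (2:ℝ) ≤ (k:ℝ) := by exact_mod_cast hk2
  have hev2 : Even (k - 2) := by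
    obtain ⟨m, hm⟩ := hkeven; exact ⟨m - 1, by omega⟩
  have hkk : (0:ℝ) ≤ (k:ℝ) * ((k:ℝ) - 1) := by nlinarith
  exact mul_nonneg hkk (hev2.pow_nonneg (x j))

lemma hessDet_bound (hβ0 : 0 < β) (hβ1 : β < 1) (hk2 : 2 ≤ k) (hkeven : Even k)
    {x : EuclideanSpace ℝ (Fin n)} (hx : x ∈ Om n k β) :
    hessDet (vf n k β) x ≤
      ((k:ℝ) * ((k:ℝ) - 1)) ^ (n - 1) *
        Gfun n (β - 2 + β * (((k:ℝ) - 2) / (k:ℝ)) * ((n:ℝ) - 1)) x := by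
  have hn1 : 1 ≤ n := NeZero.one_le
  have hx0 : 0 < x 0 := hx.1
  have hx1 : x 0 < 1 := mem_Om_lt_one hβ1 hkeven hx
  have h2k : (2:ℝ) ≤ (k:ℝ) := by exact_mod_cast hk2
  have hkk : (0:ℝ) ≤ (k:ℝ) * ((k:ℝ) - 1) := by nlinarith
  set e : ℝ := ((k:ℝ) - 2) / (k:ℝ) with he
  have he0 : 0 ≤ e := div_nonneg (by linarith) (by positivity)
  have hG : Gfun n (β - 2 + β * e * ((n:ℝ) - 1)) x = (x 0) ^ (β - 2 + β * e * ((n:ℝ) - 1)) :=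
    Gfun_eq ⟨hx0, hx1⟩ (fun j hj => by
      have := mem_Om_abs_lt_one hβ0 hβ1 hkeven (by omega) hx j
      exact abs_lt.1 this)
  rw [hG, hessDet_eq (by omega) hx0]
  have hbd : ∀ j ∈ Finset.univ.erase (0 : Fin n),
      (k:ℝ) * ((k:ℝ) - 1) * (x j) ^ (k - 2) ≤
        (k:ℝ) * ((k:ℝ) - 1) * (((x 0) ^ β) ^ e) := by
    intro j hj
    have hple := mem_Om_pow_le hkeven hx (Finset.mem_erase.1 hj).1
    exact mul_le_mul_of_nonneg_left (pow_sub_two_le hk2 hkeven hple) hkk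
  have hnn : ∀ j ∈ Finset.univ.erase (0 : Fin n),
      0 ≤ (k:ℝ) * ((k:ℝ) - 1) * (x j) ^ (k - 2) := by
    intro j _
    have hev2 : Even (k - 2) := by
      obtain ⟨m, hm⟩ := hkeven; exact ⟨m - 1, by omega⟩
    exact mul_nonneg hkk (hev2.pow_nonneg (x j))
  have hprodle : ∏ j ∈ Finset.univ.erase (0 : Fin n),
      ((k:ℝ) * ((k:ℝ) - 1) * (x j) ^ (k - 2)) ≤
      ((k:ℝ) * ((k:ℝ) - 1) * (((x 0) ^ β) ^ e)) ^ (n - 1) := by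
    calc ∏ j ∈ Finset.univ.erase (0 : Fin n), ((k:ℝ) * ((k:ℝ) - 1) * (x j) ^ (k - 2))
        ≤ ∏ _j ∈ Finset.univ.erase (0 : Fin n), ((k:ℝ) * ((k:ℝ) - 1) * (((x 0) ^ β) ^ e)) :=
          Finset.prod_le_prod hnn hbd
      _ = ((k:ℝ) * ((k:ℝ) - 1) * (((x 0) ^ β) ^ e)) ^ (n - 1) := by
          rw [Finset.prod_const, Finset.card_erase_of_mem (Finset.mem_univ _),
            Finset.card_univ, Fintype.card_fin]
  have hkey : (x 0) ^ (β - 2) * (((x 0) ^ β) ^ e) ^ (n - 1) =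
      (x 0) ^ (β - 2 + β * e * ((n:ℝ) - 1)) := by
    rw [← Real.rpow_mul hx0.le β e]
    rw [← Real.rpow_natCast ((x 0) ^ (β * e)) (n - 1)]
    rw [← Real.rpow_mul hx0.le (β * e) ((n - 1 : ℕ) : ℝ)]
    rw [← Real.rpow_add hx0]
    congr 1
    rw [Nat.cast_sub hn1, Nat.cast_one]
    try ring
  have hc0 : 0 ≤ β * (1 - β) * (x 0) ^ (β - 2) := by
    have hp := Real.rpow_pos_of_pos hx0 (β - 2)
    nlinarith [mul_pos (mul_pos hβ0 (show (0:ℝ) < 1 - β by linarith)) hp]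
  calc β * (1 - β) * (x 0) ^ (β - 2) *
        ∏ j ∈ Finset.univ.erase (0 : Fin n), ((k:ℝ) * ((k:ℝ) - 1) * (x j) ^ (k - 2))
      ≤ β * (1 - β) * (x 0) ^ (β - 2) *
          (((k:ℝ) * ((k:ℝ) - 1) * (((x 0) ^ β) ^ e)) ^ (n - 1)) :=
        mul_le_mul_of_nonneg_left hprodle hc0
    _ = β * (1 - β) * (((k:ℝ) * ((k:ℝ) - 1)) ^ (n - 1) *
          ((x 0) ^ (β - 2) * (((x 0) ^ β) ^ e) ^ (n - 1))) := by
        rw [mul_pow]; ring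
    _ = β * (1 - β) * (((k:ℝ) * ((k:ℝ) - 1)) ^ (n - 1) *
          (x 0) ^ (β - 2 + β * e * ((n:ℝ) - 1))) := by rw [hkey]
    _ ≤ 1 * (((k:ℝ) * ((k:ℝ) - 1)) ^ (n - 1) *
          (x 0) ^ (β - 2 + β * e * ((n:ℝ) - 1))) := by
        apply mul_le_mul_of_nonneg_right (by nlinarith)
        exact mul_nonneg (pow_nonneg hkk _) (Real.rpow_pos_of_pos hx0 _).le
    _ = ((k:ℝ) * ((k:ℝ) - 1)) ^ (n - 1) * (x 0) ^ (β - 2 + β * e * ((n:ℝ) - 1)) := one_mul _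

end Aux3
section Aux4
open Set MeasureTheory
variable {n k : ℕ} {β : ℝ} [NeZero n]

lemma hess_integrableOn (hβ0 : 0 < β) (hβ1 : β < 1) (hk2 : 2 ≤ k) (hkeven : Even k)
    (hγ : -1 < β - 2 + β * (((k:ℝ) - 2) / (k:ℝ)) * ((n:ℝ) - 1)) :
    IntegrableOn (fun x => hessDet (vf n k β) x) (Om n k β) := by
  set γ : ℝ := β - 2 + β * (((k:ℝ) - 2) / (k:ℝ)) * ((n:ℝ) - 1) with hγdef
  have hOmeas : MeasurableSet (Om n k β) := (Om_open hβ0).measurableSet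
  have hGint : Integrable (fun x : EuclideanSpace ℝ (Fin n) =>
      ((k:ℝ) * ((k:ℝ) - 1)) ^ (n - 1) * Gfun n γ x) := (G_integrable hγ).const_mul _
  set F : EuclideanSpace ℝ (Fin n) → ℝ := fun x =>
    (β * (1 - β) * (x 0) ^ (β - 2)) *
      ∏ j ∈ Finset.univ.erase (0 : Fin n), ((k:ℝ) * ((k:ℝ) - 1) * (x j) ^ (k - 2)) with hF
  have hFcont : ContinuousOn F (Om n k β) := by
    apply ContinuousOn.mul
    · apply ContinuousOn.mul continuousOn_const
      apply ContinuousOn.rpow_const ((pr n 0).continuous.continuousOn)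
      exact fun x hx => Or.inl (ne_of_gt hx.1)
    · exact (continuous_finset_prod _ fun j _ =>
        (continuous_const.mul ((pr n j).continuous.pow (k - 2)))).continuousOn
  have hFmeas : AEStronglyMeasurable F (volume.restrict (Om n k β)) :=
    hFcont.aestronglyMeasurable hOmeas
  have hcong : (fun x => hessDet (vf n k β) x) =ᵐ[volume.restrict (Om n k β)] F := by
    apply ae_restrict_of_forall_mem hOmeas
    intro x hx
    exact hessDet_eq (by omega) hx.1
  have haemeas : AEStronglyMeasurable (fun x => hessDet (vf n k β) x)
      (volume.restrict (Om n k β)) := hFmeas.congr hcong.symm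
  apply Integrable.mono' hGint.restrict haemeas
  apply ae_restrict_of_forall_mem hOmeas
  intro x hx
  rw [Real.norm_eq_abs, abs_of_nonneg (hessDet_nonneg hβ0 hβ1 hk2 hkeven hx.1)]
  exact hessDet_bound hβ0 hβ1 hk2 hkeven hx

end Aux4
theorem stmt3 (n : ℕ) (hn : 2 ≤ n) (α : ℝ) (hα1 : 1 / (n : ℝ) < α) (hα2 : α < 1) :
    ∃ (Ω : Set (EuclideanSpace ℝ (Fin n))) (v : EuclideanSpace ℝ (Fin n) → ℝ),
      IsOpen Ω ∧ Convex ℝ Ω ∧ Bornology.IsBounded Ω ∧ Ω.Nonempty ∧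
      ContinuousOn v (closure Ω) ∧ ContDiffOn ℝ (⊤ : ℕ∞) v Ω ∧ ConvexOn ℝ Ω v ∧
      (∀ x ∈ frontier Ω, v x = 0) ∧
      MeasureTheory.IntegrableOn (fun x => hessDet v x) Ω ∧
      ¬ ∃ C : ℝ, ∀ x ∈ closure Ω, ∀ y ∈ closure Ω, |v x - v y| ≤ C * ‖x - y‖ ^ α := by
  haveI : NeZero n := ⟨by omega⟩
  have hn0 : (0:ℝ) < (n:ℝ) := by positivity
  have hn2 : (2:ℝ) ≤ (n:ℝ) := by exact_mod_cast hn
  have hinv : 0 < 1 / (n:ℝ) := by positivity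
  set β : ℝ := (1 / (n:ℝ) + α) / 2 with hβdef
  have hβ0 : 0 < β := by simp only [hβdef]; linarith
  have hβn : 1 / (n:ℝ) < β := by simp only [hβdef]; linarith
  have hβα : β < α := by simp only [hβdef]; linarith
  have hβ1 : β < 1 := lt_trans hβα hα2
  have hδ : 0 < β * (n:ℝ) - 1 := by
    have h1 : (1/(n:ℝ)) * n = 1 := by field_simp
    nlinarith [mul_lt_mul_of_pos_right hβn hn0]
  set δ : ℝ := β * (n:ℝ) - 1 with hδdef
  set k : ℕ := 2 * (⌈(β * ((n:ℝ) - 1)) / δ⌉₊ + 1) with hkdef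
  have hkeven : Even k := ⟨⌈(β * ((n:ℝ) - 1)) / δ⌉₊ + 1, by omega⟩
  have hk2 : 2 ≤ k := by omega
  have hk0 : (0:ℝ) < (k:ℝ) := by positivity
  have hklarge : 2 * β * ((n:ℝ) - 1) < δ * (k:ℝ) := by
    have hceil : (β * ((n:ℝ) - 1)) / δ ≤ (⌈(β * ((n:ℝ) - 1)) / δ⌉₊ : ℝ) := Nat.le_ceil _
    have hkval : (k:ℝ) = 2 * ((⌈(β * ((n:ℝ) - 1)) / δ⌉₊ : ℝ) + 1) := by
      rw [hkdef]; push_cast; ring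
    have h1 : (β * ((n:ℝ) - 1)) = ((β * ((n:ℝ) - 1)) / δ) * δ := by
      field_simp
    nlinarith
  have hγ : -1 < β - 2 + β * (((k:ℝ) - 2) / (k:ℝ)) * ((n:ℝ) - 1) := by
    have hsplit : β * (((k:ℝ) - 2) / (k:ℝ)) * ((n:ℝ) - 1) =
        β * ((n:ℝ) - 1) - 2 * β * ((n:ℝ) - 1) / (k:ℝ) := by
      field_simp
    have hdiv : 2 * β * ((n:ℝ) - 1) / (k:ℝ) < δ := by
      rw [div_lt_iff₀ hk0]
      nlinarith
    rw [hsplit]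
    simp only [hδdef] at hdiv
    linarith
  refine ⟨Om n k β, vf n k β, Om_open hβ0, ?_, Om_bounded hβ0 hβ1 hkeven (by omega), ?_,
    (vf_cont hβ0).continuousOn, (vf_contDiffOn (by omega)).mono (fun x hx => hx.1), ?_, 
    frontier_Om_zero hβ0 hkeven, hess_integrableOn hβ0 hβ1 hk2 hkeven hγ, ?_⟩
  · -- Convex
    have hset : Om n k β = {x ∈ {x : EuclideanSpace ℝ (Fin n) | 0 ≤ x 0} | vf n k β x < 0} := by
      ext x
      constructor
      · exact fun hx => ⟨hx.1.le, hx.2⟩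
      · rintro ⟨h0, hv⟩
        refine ⟨?_, hv⟩
        rcases eq_or_lt_of_le (show (0:ℝ) ≤ x 0 from h0) with h0 | h0
        · exfalso
          have : vf n k β x = ∑ j ∈ Finset.univ.erase (0 : Fin n), (x j) ^ k := by
            unfold vf
            rw [← h0, Real.zero_rpow hβ0.ne']
            ring
          have hs := sum_pow_nonneg hkeven (n := n) (k := k) x
          rw [this] at hv
          linarith
        · exact h0
    rw [hset]
    exact (vf_convexOn hβ0 hβ1 hkeven).convex_lt 0
  · -- Nonempty
    exact ⟨EuclideanSpace.single (0 : Fin n) (1/2),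
      single_mem_Om hβ1 (by omega) (by norm_num) (by norm_num)⟩
  · -- ConvexOn
    have hconv : Convex ℝ (Om n k β) := by
      have hset : Om n k β = {x ∈ {x : EuclideanSpace ℝ (Fin n) | 0 ≤ x 0} | vf n k β x < 0} := by
        ext x
        constructor
        · exact fun hx => ⟨hx.1.le, hx.2⟩
        · rintro ⟨h0, hv⟩
          refine ⟨?_, hv⟩
          rcases eq_or_lt_of_le (show (0:ℝ) ≤ x 0 from h0) with h0 | h0
          · exfalso
            have : vf n k β x = ∑ j ∈ Finset.univ.erase (0 : Fin n), (x j) ^ k := by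
              unfold vf
              rw [← h0, Real.zero_rpow hβ0.ne']
              ring
            have hs := sum_pow_nonneg hkeven (n := n) (k := k) x
            rw [this] at hv
            linarith
          · exact h0
      rw [hset]
      exact (vf_convexOn hβ0 hβ1 hkeven).convex_lt 0
    exact (vf_convexOn hβ0 hβ1 hkeven).subset (fun x hx => hx.1.le) hconv
  · -- not Hölder
    rintro ⟨C, hC⟩
    -- choose t
    set M : ℝ := max (C + 2) 2 with hMdef
    have hM2 : (2:ℝ) ≤ M := le_max_right _ _
    have hMC : C + 2 ≤ M := le_max_left _ _
    have hM1 : (1:ℝ) < M := by linarith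
    have hexp : -1 / (α - β) < 0 := by
      apply div_neg_of_neg_of_pos <;> linarith
    set t : ℝ := M ^ (-1 / (α - β)) with htdef
    have ht0 : 0 < t := Real.rpow_pos_of_pos (by linarith) _
    have ht1 : t < 1 := Real.rpow_lt_one_of_one_lt_of_neg hM1 hexp
    have htM : t ^ (β - α) = M := by
      rw [htdef, ← Real.rpow_mul (by linarith : (0:ℝ) ≤ M)]
      have : -1 / (α - β) * (β - α) = 1 := by
        rw [div_mul_eq_mul_div, show (-1) * (β - α) = α - β by ring]
        exact div_self (by linarith)
      rw [this, Real.rpow_one]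
    -- membership
    have hxmem : EuclideanSpace.single (0 : Fin n) t ∈ Om n k β :=
      single_mem_Om hβ1 (by omega) ht0 ht1
    have hxcl : EuclideanSpace.single (0 : Fin n) t ∈ closure (Om n k β) :=
      subset_closure hxmem
    have h0cl : (0 : EuclideanSpace ℝ (Fin n)) ∈ closure (Om n k β) := by
      rw [Metric.mem_closure_iff]
      intro ε hε
      set s : ℝ := min (ε / 2) (1 / 2) with hsdef
      have hs0 : 0 < s := by
        apply lt_min <;> linarith
      have hs1 : s < 1 := lt_of_le_of_lt (min_le_right _ _) (by norm_num)
      refine ⟨EuclideanSpace.single (0 : Fin n) s, single_mem_Om hβ1 (by omega) hs0 hs1, ?_⟩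
      rw [dist_eq_norm, zero_sub, norm_neg, EuclideanSpace.norm_single]
      rw [Real.norm_eq_abs, abs_of_pos hs0]
      calc s ≤ ε / 2 := min_le_left _ _
        _ < ε := by linarith
    have hCb := hC _ hxcl _ h0cl
    have hv0 : vf n k β (0 : EuclideanSpace ℝ (Fin n)) = 0 := by
      unfold vf
      have : (0 : EuclideanSpace ℝ (Fin n)) 0 = (0:ℝ) := rfl
      rw [this, Real.zero_rpow hβ0.ne']
      simp [zero_pow (show k ≠ 0 by omega)]
    have hvx : vf n k β (EuclideanSpace.single (0 : Fin n) t) = t - t ^ β :=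
      vf_single (by omega) t
    have htβ : t < t ^ β := by
      have : t ^ (1:ℝ) < t ^ β := Real.rpow_lt_rpow_of_exponent_gt ht0 ht1 hβ1
      rwa [Real.rpow_one] at this
    have hnorm : ‖EuclideanSpace.single (0 : Fin n) t - (0 : EuclideanSpace ℝ (Fin n))‖ = t := by
      rw [sub_zero, EuclideanSpace.norm_single, Real.norm_eq_abs, abs_of_pos ht0]
    rw [hv0, hvx, hnorm, sub_zero, abs_of_neg (by linarith)] at hCb
    -- hCb : -(t - t^β) ≤ C * t^α
    set A : ℝ := t ^ α with hAdef
    have hA0 : 0 < A := Real.rpow_pos_of_pos ht0 _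
    have hB1 : t ^ ((1:ℝ) - α) < 1 :=
      Real.rpow_lt_one ht0.le ht1 (by linarith)
    have hB0 : 0 < t ^ ((1:ℝ) - α) := Real.rpow_pos_of_pos ht0 _
    have heq1 : t ^ β = A * M := by
      rw [hAdef, ← htM, ← Real.rpow_add ht0]
      congr 1
      ring
    have heq2 : t = A * t ^ ((1:ℝ) - α) := by
      rw [hAdef, ← Real.rpow_add ht0]
      rw [show α + ((1:ℝ) - α) = 1 by ring, Real.rpow_one]
    have hkey : A * (M - t ^ ((1:ℝ) - α)) ≤ C * A := by
      calc A * (M - t ^ ((1:ℝ) - α)) = -(t - t ^ β) := by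
            rw [heq1]
            nth_rewrite 2 [heq2]
            ring
        _ ≤ C * A := hCb
    have hge : A * (C + 1) ≤ A * (M - t ^ ((1:ℝ) - α)) := by
      apply mul_le_mul_of_nonneg_left _ hA0.le
      linarith
    linarith
end
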